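/- Let (V, μ, α) be a multiplicative Hom-Jordan algebra over a field F which is perfect, i.e. V equals the linear span μ(V, V) of all products μ(x, y). Let f : V × V → F be an invariant bilinear form on V, i.e. f(μ(x, y), z) = f(x, μ(y, z)) for all x, y, z ∈ V. Then every element ψ of the α^k-centroid C_{α^k}(V) (k ≥ 0) is α^k-symmetric with respect to f: f(ψ(x), α^k(z)) = f(α^k(x), ψ(z)) for all x, z ∈ V. -/
import Mathlib


/-- `ψ` lies in the `α^k`-centroid of the Hom-Jordan algebra `(V, μ, α)`. -/
def InCentroid {F V : Type*} [Field F] [AddCommGroup V] [Module F V]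
    (μ : V →ₗ[F] V →ₗ[F] V) (α : V →ₗ[F] V) (k : ℕ) (D : V →ₗ[F] V) : Prop :=
  D ∘ₗ α = α ∘ₗ D ∧ ∀ x y : V,
    μ (D x) ((α ^ k) y) = D (μ x y) ∧ μ ((α ^ k) x) (D y) = D (μ x y)

theorem stmt19 {F V : Type*} [Field F] [AddCommGroup V] [Module F V]
    (μ : V →ₗ[F] V →ₗ[F] V) (α : V →ₗ[F] V)
    (hcomm : ∀ x y : V, μ x y = μ y x)
    (hJ : ∀ x y : V, μ (α (α x)) (μ y (μ x x)) = μ (μ (α x) y) (α (μ x x)))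
    (hmult : ∀ x y : V, α (μ x y) = μ (α x) (α y))
    (hperfect : Submodule.span F {z : V | ∃ x y : V, z = μ x y} = ⊤)
    (f : V →ₗ[F] V →ₗ[F] F)
    (hinv : ∀ x y z : V, f (μ x y) z = f x (μ y z))
    (k : ℕ) (ψ : V →ₗ[F] V) (hψ : InCentroid μ α k ψ) :
    ∀ x z : V, f (ψ x) ((α ^ k) z) = f ((α ^ k) x) (ψ z) := by
  obtain ⟨_, hcent⟩ := hψ
  have hmultk : ∀ (n : ℕ) (a b : V), (α ^ n) (μ a b) = μ ((α ^ n) a) ((α ^ n) b) := by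
    intro n a b
    induction n with
    | zero => simp
    | succ n ih =>
      have : α ^ (n + 1) = α ∘ₗ α ^ n := by
        rw [pow_succ']
        rfl
      simp only [this, LinearMap.comp_apply, ih, hmult]
  intro x z
  have key : ∀ a ∈ ({w : V | ∃ x y : V, w = μ x y} : Set V),
      f (ψ a) ((α ^ k) z) = f ((α ^ k) a) (ψ z) := by
    rintro _ ⟨a, b, rfl⟩
    calc f (ψ (μ a b)) ((α ^ k) z)
        = f (μ ((α ^ k) a) (ψ b)) ((α ^ k) z) := by rw [(hcent a b).2]
      _ = f ((α ^ k) a) (μ (ψ b) ((α ^ k) z)) := hinv _ _ _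
      _ = f ((α ^ k) a) (μ ((α ^ k) b) (ψ z)) := by
          rw [(hcent b z).1, (hcent b z).2]
      _ = f (μ ((α ^ k) a) ((α ^ k) b)) (ψ z) := (hinv _ _ _).symm
      _ = f ((α ^ k) (μ a b)) (ψ z) := by rw [hmultk k]
  have hx : x ∈ Submodule.span F {w : V | ∃ x y : V, w = μ x y} := by
    rw [hperfect]; trivial
  refine Submodule.span_induction key ?_ ?_ ?_ hx
  · simp
  · intro a b _ _ ha hb
    simp [map_add, ha, hb]
  · intro c a _ ha
    simp [map_smul, ha]
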